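/- The bounding body B(d) = R₂(d) ⊕ ball(0, r(d)) (Minkowski sum of the inset rectangle R₂(d) with the closed ball of radius r(d) = √(2d² + h²/4)) contains the cuboid [−a/2,a/2]×[−b/2,b/2]×[−h/2,h/2] for every d ∈ [0, b/2]. -/

import Mathlib

/-!
Project a point `x` of the cuboid onto the inset rectangle by clamping its first two coordinates.
Each of these moves by at most `d` and the third by at most `h / 2`, so `x` lies within
`√(d² + d² + (h/2)²) = r(d)` of the rectangle.
-/

open scoped Pointwise

lemma exists_abs_le_sub_abs_sub_le {t M d : ℝ} (hd : 0 ≤ d) (hdM : d ≤ M) (ht : |t| ≤ M) :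
    ∃ s, |s| ≤ M - d ∧ |t - s| ≤ d := by
  refine ⟨max (d - M) (min (M - d) t), ?_, ?_⟩ <;> rw [abs_le] at * <;> grind

lemma EuclideanSpace.norm_le_sqrt_sum_sq {ι : Type*} [Fintype ι] {v : EuclideanSpace ℝ ι}
    {c : ι → ℝ} (hv : ∀ i, |v i| ≤ c i) : ‖v‖ ≤ √(∑ i, c i ^ 2) := by
  rw [EuclideanSpace.norm_eq]
  gcongr with i
  simpa only [Real.norm_eq_abs] using hv i

theorem cuboid_subset_bounding_body_general
    (a b h : ℝ) (hba : b ≤ a)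
    (d : ℝ) (hd : d ∈ Set.Icc (0:ℝ) (b / 2)) :
    let cuboid : Set (EuclideanSpace ℝ (Fin 3)) :=
      {x | |x 0| ≤ a / 2 ∧ |x 1| ≤ b / 2 ∧ |x 2| ≤ h / 2}
    let R2 : Set (EuclideanSpace ℝ (Fin 3)) :=
      {x | |x 0| ≤ a / 2 - d ∧ |x 1| ≤ b / 2 - d ∧ x 2 = 0}
    let r := Real.sqrt (2 * d ^ 2 + h ^ 2 / 4)
    cuboid ⊆ R2 + Metric.closedBall (0 : EuclideanSpace ℝ (Fin 3)) r := by
  intro cuboid R2 r x ⟨hx0, hx1, hx2⟩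
  obtain ⟨hd0, hdb⟩ := hd
  obtain ⟨s0, hs0, hxs0⟩ := exists_abs_le_sub_abs_sub_le hd0 (by linarith) hx0
  obtain ⟨s1, hs1, hxs1⟩ := exists_abs_le_sub_abs_sub_le hd0 (by linarith) hx1
  let y : EuclideanSpace ℝ (Fin 3) := !₂[s0, s1, 0]
  have hy : y ∈ R2 := ⟨hs0, hs1, rfl⟩
  have hxy : ‖x - y‖ ≤ r := by
    have hr : r = √(∑ i, ![d, d, h / 2] i ^ 2) := by
      simp only [r, Fin.sum_univ_three]
      congr 1
      simp only [Matrix.cons_val]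
      ring
    rw [hr]
    refine EuclideanSpace.norm_le_sqrt_sum_sq fun i => ?_
    fin_cases i
    · simpa [y] using hxs0
    · simpa [y] using hxs1
    · simpa [y] using hx2
  exact Set.mem_add.2 ⟨y, hy, x - y, mem_closedBall_zero_iff.2 hxy, add_sub_cancel y x⟩

theorem cuboid_subset_bounding_body
    (a b h : ℝ) (hba : b ≤ a) (hhb : h ≤ b) (hh : 0 < h)
    (d : ℝ) (hd : d ∈ Set.Icc (0:ℝ) (b / 2)) :
    let cuboid : Set (EuclideanSpace ℝ (Fin 3)) :=
      {x | |x 0| ≤ a / 2 ∧ |x 1| ≤ b / 2 ∧ |x 2| ≤ h / 2}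
    let R2 : Set (EuclideanSpace ℝ (Fin 3)) :=
      {x | |x 0| ≤ a / 2 - d ∧ |x 1| ≤ b / 2 - d ∧ x 2 = 0}
    let r := Real.sqrt (2 * d ^ 2 + h ^ 2 / 4)
    cuboid ⊆ R2 + Metric.closedBall (0 : EuclideanSpace ℝ (Fin 3)) r :=
  cuboid_subset_bounding_body_general a b h hba d hd
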